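/- arXiv:1910.05797 — 6 statements merged into one kernel-verified Lean document; each statement's English description precedes it below -/
import Mathlib

section
/- For every real x with 0 < x ≤ 1/5, one has (2x)^(1/5) > √2 · sin(πx). -/
open Real

lemma sqrt2_lt : Real.sqrt 2 < 1.4142136 := by
  have h1 : Real.sqrt 2 ^ 2 = 2 := Real.sq_sqrt (by norm_num)
  have h2 : (0:ℝ) ≤ Real.sqrt 2 := Real.sqrt_nonneg 2
  nlinarith

lemma sqrt5_gt : (2.2360679:ℝ) < Real.sqrt 5 := by
  have h1 : Real.sqrt 5 ^ 2 = 5 := Real.sq_sqrt (by norm_num)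
  have h2 : (0:ℝ) ≤ Real.sqrt 5 := Real.sqrt_nonneg 5
  nlinarith

lemma sqrt5_lt : Real.sqrt 5 < 2.2360680 := by
  have h1 : Real.sqrt 5 ^ 2 = 5 := Real.sq_sqrt (by norm_num)
  have h2 : (0:ℝ) ≤ Real.sqrt 5 := Real.sqrt_nonneg 5
  nlinarith

lemma cos_pi5_gt : (0.8090169:ℝ) < Real.cos (π/5) := by
  rw [Real.cos_pi_div_five]
  have := sqrt5_gt; linarith

lemma cos_pi5_lt : Real.cos (π/5) < 0.8090170 := by
  rw [Real.cos_pi_div_five]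
  have := sqrt5_lt; linarith

lemma sin_pi5_nonneg : (0:ℝ) ≤ Real.sin (π/5) := by
  apply Real.sin_nonneg_of_nonneg_of_le_pi (by positivity)
  have := Real.pi_pos; linarith

lemma sin_pi5_lt : Real.sin (π/5) ≤ 0.587786 := by
  have h1 : Real.sin (π/5) ^ 2 = 1 - Real.cos (π/5) ^ 2 := by
    have := Real.sin_sq_add_cos_sq (π/5); linarith
  have h2 := cos_pi5_gt
  have h3 := sin_pi5_nonneg
  have h4 := cos_pi5_lt
  nlinarith

lemma sin_le_tangent {h : ℝ} (h0 : h ≤ 0) (h1 : -1 ≤ h) : Real.sin h ≤ h - h ^ 3 / 4 := by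
  rcases eq_or_lt_of_le h0 with he | hlt
  · rw [he]; norm_num
  · have := Real.sin_gt_sub_cube (x := -h) (by linarith)
    rw [Real.sin_neg] at this
    nlinarith [mul_pos (neg_pos.2 hlt) (mul_pos (neg_pos.2 hlt) (neg_pos.2 hlt))]


lemma stmt2_aux (x h p c s ch sh sx : ℝ)
    (hp1 : 3.141592 < p) (hp2 : p < 3.141593)
    (hc1 : (0.8090169:ℝ) < c) (hc2 : c < 0.8090170)
    (hs1 : 0 ≤ s) (hs2 : s ≤ 0.587786)
    (hch : ch ≤ 1)
    (hx1 : (0.18:ℝ) < x) (hx2 : x ≤ 1/5)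
    (hh : h = p * (x - 1/5))
    (hsh : sh ≤ h - h^3/4)
    (hsx : sx = s * ch + c * sh) :
    sx ≤ 0.5878362 + 2.5416 * (x - 1/5) := by
  have hh0 : h ≤ 0 := by nlinarith
  have hhl : -0.0628319 ≤ h := by nlinarith
  have t1 : s * ch ≤ s := by nlinarith
  have hq : h - h^3/4 ≤ 0 := by nlinarith [sq_nonneg h]
  have t2 : c * sh ≤ c * (h - h^3/4) := by nlinarith
  have hc3 : -(h^3)/4 ≤ 0.000062014 := by
    nlinarith [sq_nonneg h, sq_nonneg (h + 0.0628319)]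
  have t3 : c * (h - h^3/4) ≤ 0.8090169 * h + 0.0000502 := by nlinarith
  have t4 : (0.8090169:ℝ) * h ≤ 2.5416 * (x - 1/5) := by nlinarith
  nlinarith

theorem stmt_2 (x : ℝ) (hx : 0 < x) (hx' : x ≤ 1 / 5) :
    (2 * x) ^ ((1 : ℝ) / 5) > Real.sqrt 2 * Real.sin (π * x) := by
  have h2x : (0:ℝ) < 2 * x := by linarith
  have hA : (0:ℝ) < (2 * x) ^ ((1:ℝ)/5) := Real.rpow_pos_of_pos h2x _
  have hA5 : ((2 * x) ^ ((1:ℝ)/5)) ^ 5 = 2 * x := by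
    rw [← Real.rpow_natCast ((2*x) ^ ((1:ℝ)/5)) 5, ← Real.rpow_mul h2x.le]
    norm_num
  have hpil : (3.141592:ℝ) < π := Real.pi_gt_d6
  have hpiu : π < 3.141593 := Real.pi_lt_d6
  have hs2u : Real.sqrt 2 < 1.4142136 := sqrt2_lt
  have hs2nn : (0:ℝ) ≤ Real.sqrt 2 := Real.sqrt_nonneg 2
  have hspos : 0 < Real.sin (π * x) := by
    apply Real.sin_pos_of_pos_of_lt_pi (by positivity)
    nlinarith
  have hkey : (Real.sqrt 2 * Real.sin (π * x)) ^ 5 < 2 * x := by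
    rcases le_or_gt x 0.18 with hc | hc
    · -- small x : sin t < t
      have hs : Real.sin (π * x) < π * x := Real.sin_lt (by positivity)
      have h1 : Real.sqrt 2 * Real.sin (π * x) < 1.4142136 * (3.141593 * x) := by
        nlinarith
      have h2 : (Real.sqrt 2 * Real.sin (π * x)) ^ 5 < (1.4142136 * (3.141593 * x)) ^ 5 := by
        apply pow_lt_pow_left₀ h1 (by positivity)
        norm_num
      have hx4 : x ^ 4 ≤ 0.18 ^ 4 := pow_le_pow_left₀ hx.le hc 4
      have h3 : (1.4142136 * (3.141593 * x)) ^ 5 ≤ 2 * x := by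
        nlinarith [mul_le_mul_of_nonneg_right hx4 hx.le]
      linarith
    · -- large x : tangent line at π/5
      obtain ⟨h, hh⟩ : ∃ h : ℝ, h = π * (x - 1/5) := ⟨_, rfl⟩
      have hh0 : h ≤ 0 := by nlinarith
      have hhl : -0.0628319 ≤ h := by nlinarith
      have hsinh : Real.sin h ≤ h - h ^ 3 / 4 := sin_le_tangent hh0 (by linarith)
      have hexp : Real.sin (π * x) = Real.sin (π/5) * Real.cos h + Real.cos (π/5) * Real.sin h := by
        rw [show π * x = π/5 + h by rw [hh]; ring, Real.sin_add]
      have hM : Real.sin (π * x) ≤ 0.5878362 + 2.5416 * (x - 1/5) :=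
        stmt2_aux x h π (Real.cos (π/5)) (Real.sin (π/5)) (Real.cos h) (Real.sin h)
          (Real.sin (π * x)) hpil hpiu cos_pi5_gt cos_pi5_lt sin_pi5_nonneg sin_pi5_lt
          (Real.cos_le_one h) hc hx' hh hsinh hexp
      have hMpos : (0:ℝ) < 0.5878362 + 2.5416 * (x - 1/5) := by nlinarith
      have h4 : Real.sqrt 2 * Real.sin (π * x) ≤ 1.4142136 * (0.5878362 + 2.5416 * (x - 1/5)) := by
        nlinarith
      have h5 : (Real.sqrt 2 * Real.sin (π * x)) ^ 5 ≤ (1.4142136 * (0.5878362 + 2.5416 * (x - 1/5))) ^ 5 :=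
        pow_le_pow_left₀ (by positivity) h4 5
      have h6 : (1.4142136 * (0.5878362 + 2.5416 * (x - 1/5))) ^ 5 < 2 * x := by
        nlinarith [mul_nonneg (sub_nonneg.2 hc.le) (sub_nonneg.2 hx'),
          mul_nonneg (mul_nonneg (sub_nonneg.2 hc.le) (sub_nonneg.2 hx')) (sub_nonneg.2 hc.le),
          sq_nonneg (x - 0.19), sq_nonneg (x - 0.2), sq_nonneg (x - 0.18)]
      linarith
  have hkey' : (Real.sqrt 2 * Real.sin (π * x)) ^ 5 < ((2 * x) ^ ((1:ℝ)/5)) ^ 5 := by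
    rw [hA5]; exact hkey
  exact lt_of_pow_lt_pow_left₀ 5 hA.le hkey'
end

section
/- For every real x with 0 < x ≤ 1/6, one has (2x)^(1/4) > √2 · sin(πx). -/
open Real

theorem stmt_3 (x : ℝ) (hx : 0 < x) (hx' : x ≤ 1 / 6) :
    (2 * x) ^ ((1 : ℝ) / 4) > Real.sqrt 2 * Real.sin (π * x) := by
  have hπ := Real.pi_pos
  have hsin : Real.sin (π * x) < π * x := Real.sin_lt (by positivity)
  have h2x : (0:ℝ) ≤ 2 * x := by linarith
  have hc : ((2 * x) ^ ((1:ℝ)/4)) ^ (4:ℕ) = 2 * x := by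
    rw [← Real.rpow_natCast ((2*x) ^ ((1:ℝ)/4)) 4, ← Real.rpow_mul h2x]
    norm_num
  have hs : Real.sqrt 2 ^ 2 = 2 := Real.sq_sqrt (by norm_num)
  have hpil : π < 3.15 := Real.pi_lt_d2
  have hp2 : π ^ 2 < 9.93 := by nlinarith
  have hp4 : π ^ 4 < 98.61 := by nlinarith
  have hx3 : x ^ 3 ≤ 1 / 216 := by nlinarith [sq_nonneg x, mul_pos hx hx]
  have hkey : Real.sqrt 2 * (π * x) ≤ (2 * x) ^ ((1:ℝ)/4) := by
    have hcnn : (0:ℝ) ≤ (2 * x) ^ ((1:ℝ)/4) := Real.rpow_nonneg h2x _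
    have hpow : (Real.sqrt 2 * (π * x)) ^ 4 ≤ ((2 * x) ^ ((1:ℝ)/4)) ^ 4 := by
      rw [hc]
      have hexp : (Real.sqrt 2 * (π * x)) ^ 4 = 4 * (π ^ 4 * x ^ 4) := by
        have : Real.sqrt 2 ^ 4 = 4 := by nlinarith
        rw [mul_pow, mul_pow, this]
      rw [hexp]
      nlinarith [pow_pos hπ 4, mul_pos hx hx, pow_pos hx 3, pow_pos hx 4,
        mul_le_mul_of_nonneg_left hx3 (le_of_lt (pow_pos hπ 4))]
    exact le_of_pow_le_pow_left₀ (by norm_num) hcnn hpow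
  have hs2 : (0:ℝ) < Real.sqrt 2 := by positivity
  calc Real.sqrt 2 * Real.sin (π*x) < Real.sqrt 2 * (π * x) := by nlinarith
    _ ≤ _ := hkey
end

section
/- For every integer m ≥ 5 and integers n ≥ 7, the quantity a_{n,m} := (∑_{j=1}^{m-1} (√2 · sin(πj/m))^{-(n-2)}) − m is positive. -/
open Real Finset

set_option maxHeartbeats 1000000 in
theorem stmt_5 (m n : ℕ) (hm : 5 ≤ m) (hn : 7 ≤ n) :
    0 < (∑ j ∈ Finset.Icc 1 (m - 1), (Real.sqrt 2 * Real.sin (π * j / m))⁻¹ ^ (n - 2))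
      - (m : ℝ) := by
  have hm5 : (5:ℝ) ≤ m := by exact_mod_cast hm
  have hm0 : (0:ℝ) < m := by linarith
  have hπ : π < 3.15 := Real.pi_lt_d2
  have hπ0 : 0 < π := Real.pi_pos
  have hsin : 0 < Real.sin (π / m) := by
    apply Real.sin_pos_of_pos_of_lt_pi (by positivity)
    rw [div_lt_iff₀ hm0]; nlinarith
  set b : ℝ := Real.sqrt 2 * Real.sin (π / m) with hbdef
  have h2 : Real.sqrt 2 ^ 2 = 2 := Real.sq_sqrt (by norm_num)
  have h2n : 0 < Real.sqrt 2 := Real.sqrt_pos.mpr (by norm_num)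
  have hs2 : Real.sqrt 2 < 1.42 := by nlinarith
  have hb0 : 0 < b := mul_pos h2n hsin
  have hsinlt := Real.sin_lt (show 0 < π/m by positivity)
  have hbπ : b * m < Real.sqrt 2 * π := by
    calc b * m < Real.sqrt 2 * (π/m) * m := by
          apply mul_lt_mul_of_pos_right _ hm0
          exact mul_lt_mul_of_pos_left hsinlt h2n
      _ = Real.sqrt 2 * π := by field_simp
  have hb1 : b < 1 := by nlinarith
  have key : (m:ℝ) * b^5 < 2 := by
    rcases eq_or_lt_of_le hm5 with h5 | h6
    · -- m = 5
      have hcos : Real.cos (π/5) = (1 + Real.sqrt 5)/4 := Real.cos_pi_div_five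
      have h5sq : Real.sqrt 5 ^ 2 = 5 := Real.sq_sqrt (by norm_num)
      have h5n : 0 < Real.sqrt 5 := Real.sqrt_pos.mpr (by norm_num)
      have h5lb : 2.236 < Real.sqrt 5 := by nlinarith [h5sq, h5n]
      have h5ub : Real.sqrt 5 < 2.2361 := by nlinarith [h5sq, h5n]
      have hbsq : b^2 = (5 - Real.sqrt 5)/4 := by
        have hpyth := Real.sin_sq_add_cos_sq (π/5)
        have hm5' : (m:ℝ) = 5 := h5.symm
        rw [hbdef, hm5', mul_pow, h2]
        rw [hcos] at hpyth
        linarith [hpyth, h5sq, sq_nonneg (Real.sqrt 5)]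
      have hu0 : (0:ℝ) ≤ (5 - Real.sqrt 5)/4 := by linarith [h5ub]
      have hu : (5 - Real.sqrt 5)/4 < 0.691 := by linarith [h5lb]
      have hupow : ((5 - Real.sqrt 5)/4)^5 < 0.691^5 :=
        pow_lt_pow_left₀ hu hu0 (by norm_num)
      have hsq : ((m:ℝ) * b^5)^2 < 2^2 := by
        have : ((m:ℝ) * b^5)^2 = 25 * (b^2)^5 := by rw [← h5]; ring
        rw [this, hbsq]
        nlinarith [hupow]
      have hpos : 0 ≤ (m:ℝ) * b^5 := by positivity
      exact lt_of_pow_lt_pow_left₀ 2 (by norm_num) hsq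
    · -- m ≥ 6
      have hm6 : (6:ℝ) ≤ m := by
        have : 6 ≤ m := by
          by_contra h
          interval_cases m <;> simp_all
        exact_mod_cast this
      have hm4 : (1296:ℝ) ≤ (m:ℝ)^4 := by
        have := pow_le_pow_left₀ (by norm_num : (0:ℝ) ≤ 6) hm6 4
        norm_num at this; linarith
      have hbm5 : (b*m)^5 < (Real.sqrt 2 * π)^5 :=
        pow_lt_pow_left₀ hbπ (by positivity) (by norm_num)
      have hπ5 : π^5 < 3.15^5 := pow_lt_pow_left₀ hπ hπ0.le (by norm_num)
      have hC : (Real.sqrt 2 * π)^5 < 1762 := by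
        have h25 : Real.sqrt 2 ^ 5 = 4 * Real.sqrt 2 := by
          calc Real.sqrt 2^5 = (Real.sqrt 2^2)^2 * Real.sqrt 2 := by ring
            _ = 4 * Real.sqrt 2 := by rw [h2]; norm_num
        have heq : (Real.sqrt 2 * π)^5 = 4 * Real.sqrt 2 * π^5 := by
          rw [mul_pow, h25]
        rw [heq]
        have hA : (4*Real.sqrt 2) * π^5 ≤ (4*Real.sqrt 2) * 3.15^5 :=
          mul_le_mul_of_nonneg_left hπ5.le (by positivity)
        nlinarith [hA, hs2]
      have h1762 : (m:ℝ)^5 * b^5 < 1762 := by nlinarith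
      nlinarith [mul_nonneg (le_of_lt hb0) (le_of_lt hm0)]
  -- conclude m < 2 * b⁻¹ ^ (n-2)
  have hbinv1 : 1 ≤ b⁻¹ := (one_le_inv₀ hb0).mpr hb1.le
  have hkey2 : (m:ℝ) < 2 * b⁻¹ ^ (n-2) := by
    have h5pow : (m:ℝ) < 2 * b⁻¹^5 := by
      have hb5 : 0 < b^5 := pow_pos hb0 5
      rw [inv_pow, show (2:ℝ) * (b^5)⁻¹ = 2 / b^5 by ring, lt_div_iff₀ hb5]
      linarith [key]
    have hmono : b⁻¹^5 ≤ b⁻¹^(n-2) := pow_le_pow_right₀ hbinv1 (by omega)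
    linarith
  -- sum bound
  have hnonneg : ∀ j ∈ Finset.Icc 1 (m-1),
      0 ≤ (Real.sqrt 2 * Real.sin (π * j / m))⁻¹ ^ (n - 2) := by
    intro j hj
    simp only [Finset.mem_Icc] at hj
    have hjm : (j:ℝ) ≤ m := by
      have : j ≤ m := by omega
      exact_mod_cast this
    have : 0 ≤ Real.sin (π * j / m) := by
      apply Real.sin_nonneg_of_nonneg_of_le_pi (by positivity)
      rw [div_le_iff₀ hm0]
      nlinarith
    positivity
  have hsub : ({1, m-1} : Finset ℕ) ⊆ Finset.Icc 1 (m-1) := by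
    intro x hx; simp only [Finset.mem_insert, Finset.mem_singleton] at hx
    simp only [Finset.mem_Icc]; omega
  have hpair := Finset.sum_le_sum_of_subset_of_nonneg hsub
    (fun i hi _ => hnonneg i hi)
  rw [Finset.sum_pair (show (1:ℕ) ≠ m-1 by omega)] at hpair
  have e1 : (Real.sqrt 2 * Real.sin (π * (1:ℕ) / m))⁻¹ ^ (n-2) = b⁻¹ ^ (n-2) := by
    rw [hbdef]; norm_num
  have e2 : (Real.sqrt 2 * Real.sin (π * ((m-1:ℕ):ℝ) / m))⁻¹ ^ (n-2) = b⁻¹ ^ (n-2) := by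
    have hc : ((m-1:ℕ):ℝ) = (m:ℝ) - 1 := by
      have : (1:ℕ) ≤ m := by omega
      push_cast [Nat.cast_sub this]; ring
    rw [hc]
    have : π * ((m:ℝ)-1)/m = π - π/m := by field_simp
    rw [this, Real.sin_pi_sub, hbdef]
  rw [e1, e2] at hpair
  linarith
end

section
/- With a_{3,m} := (∑_{j=1}^{m-1} (√2 · sin(πj/m))^{-1}) − m, for every even integer m ≥ 2 one has a_{3,m+1} ≥ a_{3,m} + √2 · (1/2 − √2/2 + 1/sin(π/(m+1)) − 1/sin(π/m)). -/
open Real Finset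

/-!
Write `c_N(j) = 1 / sin (π j / N)` and `m = 2n`. After multiplying by `√2` the claim reads
`∑_{j=1}^{2n} c_{2n+1}(j) ≥ ∑_{j=1}^{2n-1} c_{2n}(j) + 1 + 2 (c_{2n+1}(1) - c_{2n}(1))`.
The symmetry `c_N(N - j) = c_N(j)` folds both sums onto `j = 1, …, n`; the even sum meets its
middle term `c_{2n}(n) = 1` only once, so the sums are `2 ∑_{j ≤ n} c_{2n+1}(j)` and
`2 ∑_{j ≤ n} c_{2n}(j) - 1`. As `sin` increases on `[0, π/2]`, `c_{2n}(j) ≤ c_{2n+1}(j)` for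
`j ≤ n`, so the difference of the two is at least twice its `j = 1` term.
-/

theorem Finset.sum_Icc_one_add_eq_add_sum_reflect {M : Type*} [AddCommMonoid M] (f : ℕ → M)
    (a b : ℕ) :
    ∑ j ∈ Icc 1 (a + b), f j = ∑ j ∈ Icc 1 a, f j + ∑ j ∈ Icc 1 b, f (a + b + 1 - j) := by
  have hIcc : ∀ n, Icc 1 n = Ioc 0 n := fun n => Icc_add_one_left_eq_Ioc 0 n
  simp only [hIcc]
  rw [← sum_Ioc_consecutive f (Nat.zero_le a) (Nat.le_add_right a b)]
  congr 1
  refine sum_nbij' (fun j => a + b + 1 - j) (fun j => a + b + 1 - j) ?_ ?_ ?_ ?_ ?_ <;>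
    intro j hj <;> simp only [mem_Ioc] at hj ⊢
  · omega
  · omega
  · omega
  · omega
  · congr 1; omega

theorem inv_sin_le_inv_sin {x y : ℝ} (hx : 0 < x) (hxy : x ≤ y) (hy : y ≤ π / 2) :
    (sin y)⁻¹ ≤ (sin x)⁻¹ := by
  have hsx : 0 < sin x := sin_pos_of_pos_of_lt_pi hx (by linarith [pi_pos])
  gcongr
  exact strictMonoOn_sin.monotoneOn ⟨by linarith, by linarith⟩ ⟨by linarith, hy⟩ hxy

noncomputable def cscTerm (N j : ℕ) : ℝ := (sin (π * j / N))⁻¹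

theorem cscTerm_sub {N j : ℕ} (hj : j ≤ N) : cscTerm N (N - j) = cscTerm N j := by
  rcases Nat.eq_zero_or_pos N with rfl | hN
  · simp [cscTerm]
  have hN' : (N : ℝ) ≠ 0 := by positivity
  rw [cscTerm, cscTerm, Nat.cast_sub hj,
    show π * (N - j : ℝ) / N = π - π * j / N by field_simp, sin_pi_sub]

theorem cscTerm_le_cscTerm_succ {N j : ℕ} (hj : 1 ≤ j) (hjN : 2 * j ≤ N) :
    cscTerm N j ≤ cscTerm (N + 1) j := by
  have hj' : (1 : ℝ) ≤ j := by exact_mod_cast hj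
  have hjN' : 2 * (j : ℝ) ≤ N := by exact_mod_cast hjN
  have hN : (0 : ℝ) < N := by linarith
  rw [cscTerm, cscTerm, Nat.cast_succ]
  refine inv_sin_le_inv_sin (by positivity) ?_ ?_
  · exact div_le_div_of_nonneg_left (by positivity) hN (by linarith)
  · rw [div_le_div_iff₀ hN two_pos]
    nlinarith [pi_pos]

theorem cscTerm_two_mul_self {n : ℕ} (hn : n ≠ 0) : cscTerm (2 * n) n = 1 := by
  have hn' : (n : ℝ) ≠ 0 := by exact_mod_cast hn
  rw [cscTerm, Nat.cast_mul, Nat.cast_ofNat,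
    show π * n / (2 * n) = π / 2 by field_simp, sin_pi_div_two, inv_one]

theorem sum_cscTerm_two_mul_add_one (n : ℕ) :
    ∑ j ∈ Icc 1 (2 * n), cscTerm (2 * n + 1) j = 2 * ∑ j ∈ Icc 1 n, cscTerm (2 * n + 1) j := by
  have hsplit := sum_Icc_one_add_eq_add_sum_reflect (cscTerm (2 * n + 1)) n n
  rw [← two_mul n] at hsplit
  have hrefl : ∑ j ∈ Icc 1 n, cscTerm (2 * n + 1) (2 * n + 1 - j)
      = ∑ j ∈ Icc 1 n, cscTerm (2 * n + 1) j := by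
    refine sum_congr rfl fun j hj => ?_
    rw [mem_Icc] at hj
    exact cscTerm_sub (by omega)
  rw [hsplit, hrefl]
  ring

theorem sum_cscTerm_two_mul (n : ℕ) (hn : n ≠ 0) :
    ∑ j ∈ Icc 1 (2 * n - 1), cscTerm (2 * n) j + 1 = 2 * ∑ j ∈ Icc 1 n, cscTerm (2 * n) j := by
  obtain ⟨k, rfl⟩ := Nat.exists_eq_add_one_of_ne_zero hn
  have hsplit := sum_Icc_one_add_eq_add_sum_reflect (cscTerm (2 * (k + 1))) (k + 1) k
  rw [show k + 1 + k = 2 * (k + 1) - 1 by omega] at hsplit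
  rw [hsplit, sum_Icc_succ_top (by omega), cscTerm_two_mul_self hn]
  have hrefl : ∑ j ∈ Icc 1 k, cscTerm (2 * (k + 1)) (2 * (k + 1) - 1 + 1 - j)
      = ∑ j ∈ Icc 1 k, cscTerm (2 * (k + 1)) j := by
    refine sum_congr rfl fun j hj => ?_
    rw [mem_Icc] at hj
    rw [show 2 * (k + 1) - 1 + 1 - j = 2 * (k + 1) - j by omega]
    exact cscTerm_sub (by omega)
  rw [hrefl]
  ring

theorem sum_cscTerm_add_le_sum_cscTerm_succ {m : ℕ} (hm : 0 < m) (hme : Even m) :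
    ∑ j ∈ Icc 1 (m - 1), cscTerm m j + 1 + 2 * (cscTerm (m + 1) 1 - cscTerm m 1)
      ≤ ∑ j ∈ Icc 1 m, cscTerm (m + 1) j := by
  obtain ⟨n, rfl⟩ := hme
  rw [← two_mul] at *
  have hn : n ≠ 0 := by omega
  rw [sum_cscTerm_two_mul n hn, sum_cscTerm_two_mul_add_one]
  have hdiff_nonneg : ∀ j ∈ Icc 1 n, 0 ≤ cscTerm (2 * n + 1) j - cscTerm (2 * n) j := fun j hj => by
    rw [mem_Icc] at hj
    exact sub_nonneg.mpr (cscTerm_le_cscTerm_succ hj.1 (by omega))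
  have hfirst := single_le_sum hdiff_nonneg (left_mem_Icc.mpr (Nat.one_le_iff_ne_zero.mpr hn))
  rw [sum_sub_distrib] at hfirst
  linarith

theorem stmt_10 (m : ℕ) (hm : 2 ≤ m) (hme : Even m) :
    (∑ j ∈ Finset.Icc 1 m, (Real.sqrt 2 * Real.sin (π * j / (m + 1)))⁻¹) - ((m : ℝ) + 1)
      ≥ ((∑ j ∈ Finset.Icc 1 (m - 1), (Real.sqrt 2 * Real.sin (π * j / m))⁻¹) - (m : ℝ))
        + Real.sqrt 2 * (1 / 2 - Real.sqrt 2 / 2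
            + 1 / Real.sin (π / (m + 1)) - 1 / Real.sin (π / m)) := by
  have key := sum_cscTerm_add_le_sum_cscTerm_succ (by omega) hme
  simp only [cscTerm, Nat.cast_add, Nat.cast_one, mul_one] at key
  simp only [mul_inv, ← mul_sum, one_div]
  have hinv : (Real.sqrt 2)⁻¹ = Real.sqrt 2 / 2 := by
    rw [inv_eq_iff_eq_inv, inv_div, div_sqrt]
  have hsq : Real.sqrt 2 * Real.sqrt 2 = 2 := mul_self_sqrt zero_le_two
  rw [hinv]
  linarith [mul_le_mul_of_nonneg_left key (by positivity : (0 : ℝ) ≤ Real.sqrt 2 / 2)]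
end

section
/- With a_{3,m} := (∑_{j=1}^{m-1} (√2 · sin(πj/m))^{-1}) − m, one has a_{3,m} < 0 for m ∈ {5,6,7,8} and a_{3,m} > 0 for all integers m ≥ 9. -/
/-! Write `S m = ∑_{j=1}^{m-1} 1 / sin (π j / m)` (`cscSum m`), so that `a_{3,m}` has the
sign of `S m - √2 m`. For `m ≥ 10` the parabola bound `sin (π t) ≤ 4 t (1 - t)` on `[0, 1]` gives
`1 / sin (π j / m) ≥ (m / 4) (1 / j + 1 / (m - j))`, hence `S m ≥ (m / 2) H_{m-1} ≥ (m / 2) H_9`,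
and `H_9 = 7129 / 2520 > 2 √2`. For `5 ≤ m ≤ 9` the sum is evaluated numerically: after pairing
`j` with `m - j`, every term is bounded with low-order Taylor estimates for `sin` or `cos` and
`3.141592 < π < 3.141593`. -/

open Real Finset

lemma cos_pi_mul_le_one_sub_four_mul_sq_of_nonneg {s : ℝ} (hs0 : 0 ≤ s) (hs : s ≤ 1 / 2) :
    cos (π * s) ≤ 1 - 4 * s ^ 2 := by
  have hπ := pi_gt_d2
  have hπ' := pi_lt_d2
  rcases le_total (3 / 10) s with hs3 | hs3
  · -- `cos (π s) = sin (π (1/2 - s)) ≤ π (1/2 - s)` is enough once `π ≤ 2 + 4 s`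
    have := sin_le (x := π * (1 / 2 - s)) (by nlinarith)
    rw [mul_sub, mul_one_div, sin_pi_div_two_sub] at this
    nlinarith
  · have hx0 : 0 ≤ π * s := by positivity
    have hx1 : π * s ≤ 0.945 := by nlinarith
    have hcos := (abs_le.1 (cos_bound (x := π * s) (abs_le.2 ⟨by linarith, by linarith⟩))).2
    rw [abs_of_nonneg hx0] at hcos
    have hx2 : (π * s) ^ 2 ≤ 9 / 10 := by nlinarith
    have hx2' : 9.8 * s ^ 2 ≤ (π * s) ^ 2 := by rw [mul_pow]; gcongr; nlinarith
    nlinarith [mul_le_mul_of_nonneg_left hx2 (sq_nonneg (π * s))]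

lemma cos_pi_mul_le_one_sub_four_mul_sq {s : ℝ} (hs : |s| ≤ 1 / 2) :
    cos (π * s) ≤ 1 - 4 * s ^ 2 := by
  rw [← cos_abs, abs_mul, abs_of_pos pi_pos, ← sq_abs]
  exact cos_pi_mul_le_one_sub_four_mul_sq_of_nonneg (abs_nonneg s) hs

lemma sin_pi_mul_le_four_mul_mul_one_sub {t : ℝ} (ht0 : 0 ≤ t) (ht1 : t ≤ 1) :
    sin (π * t) ≤ 4 * t * (1 - t) := by
  have := cos_pi_mul_le_one_sub_four_mul_sq (s := 1 / 2 - t)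
    (abs_le.2 ⟨by linarith, by linarith⟩)
  rw [mul_sub, mul_one_div, cos_pi_div_two_sub] at this
  linarith

lemma mul_inv_add_inv_sub_le_inv_sin {j m : ℝ} (hj : 0 < j) (hjm : j < m) :
    m / 4 * (j⁻¹ + (m - j)⁻¹) ≤ (sin (π * j / m))⁻¹ := by
  have hm : 0 < m := hj.trans hjm
  have ht : 0 < j / m := div_pos hj hm
  have ht1 : j / m < 1 := (div_lt_one hm).2 hjm
  have hsin : 0 < sin (π * (j / m)) :=
    sin_pos_of_pos_of_lt_pi (by positivity) (by nlinarith [pi_pos])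
  have hm' : m ≠ 0 := hm.ne'
  have hmj : m - j ≠ 0 := (sub_pos.2 hjm).ne'
  calc m / 4 * (j⁻¹ + (m - j)⁻¹) = (4 * (j / m) * (1 - j / m))⁻¹ := by
        field_simp
        ring
    _ ≤ (sin (π * j / m))⁻¹ := by
        rw [mul_div_assoc]
        exact inv_anti₀ hsin (sin_pi_mul_le_four_mul_mul_one_sub ht.le ht1.le)

lemma sum_Icc_inv_sub_eq_sum_Icc_inv (m : ℕ) :
    ∑ j ∈ Icc 1 (m - 1), ((m : ℝ) - j)⁻¹ = ∑ j ∈ Icc 1 (m - 1), (j : ℝ)⁻¹ := by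
  refine sum_nbij' (m - ·) (m - ·) (fun j hj => ?_) (fun j hj => ?_) (fun j hj => ?_)
    (fun j hj => ?_) fun j hj => ?_ <;> simp only [mem_Icc] at hj ⊢
  all_goals first | omega | rw [Nat.cast_sub (by omega)]

lemma harmonic_monotone : Monotone harmonic :=
  monotone_nat_of_le_succ fun n => by
    rw [harmonic_succ]
    exact le_add_of_nonneg_right (by positivity)

lemma harmonic_nine : harmonic 9 = 7129 / 2520 := by
  simp only [harmonic_succ, harmonic_zero]
  norm_num

lemma lt_sqrt_two : 1.414213 < √2 := by
  rw [lt_sqrt (by norm_num)]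
  norm_num

lemma sqrt_two_lt : √2 < 1.4142136 := by
  rw [sqrt_lt' (by norm_num)]
  norm_num

noncomputable def cscSum (m : ℕ) : ℝ := ∑ j ∈ Icc 1 (m - 1), (sin (π * j / m))⁻¹

lemma sum_inv_sqrt_two_mul_sin_eq (m : ℕ) :
    ∑ j ∈ Icc 1 (m - 1), (√2 * sin (π * j / m))⁻¹ = cscSum m / √2 := by
  simp only [cscSum, mul_inv, ← mul_sum, div_eq_inv_mul]

lemma mul_harmonic_le_cscSum (m : ℕ) : (m : ℝ) / 2 * harmonic (m - 1) ≤ cscSum m := by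
  calc (m : ℝ) / 2 * harmonic (m - 1)
      = ∑ j ∈ Icc 1 (m - 1), (m : ℝ) / 4 * ((j : ℝ)⁻¹ + ((m : ℝ) - j)⁻¹) := by
        rw [← mul_sum, sum_add_distrib, sum_Icc_inv_sub_eq_sum_Icc_inv, harmonic_eq_sum_Icc]
        push_cast
        ring
    _ ≤ cscSum m := sum_le_sum fun j hj => by
        rw [mem_Icc] at hj
        exact mul_inv_add_inv_sub_le_inv_sin (by exact_mod_cast hj.1)
          (by exact_mod_cast (show j < m by omega))

lemma mul_sqrt_two_lt_cscSum {m : ℕ} (hm : 10 ≤ m) : m * √2 < cscSum m := by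
  have hH : (7129 / 2520 : ℝ) ≤ harmonic (m - 1) := by
    have := (Rat.cast_le (K := ℝ)).2 (harmonic_nine ▸ harmonic_monotone (show 9 ≤ m - 1 by omega))
    push_cast at this
    exact this
  have hm0 : (0 : ℝ) < m := by positivity
  calc m * √2 < m * ((7129 / 2520 : ℝ) / 2) := by
        gcongr
        linarith [sqrt_two_lt]
    _ ≤ (m : ℝ) / 2 * harmonic (m - 1) := by nlinarith
    _ ≤ cscSum m := mul_harmonic_le_cscSum m

lemma sin_pi_mul_div_eq_min {m j : ℕ} (h : j ≤ m) :
    sin (π * j / m) = sin (π * (min j (m - j) : ℕ) / m) := by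
  rcases le_total j (m - j) with hj | hj
  · rw [min_eq_left hj]
  · rcases Nat.eq_zero_or_pos m with rfl | hm
    · simp
    rw [min_eq_right hj, Nat.cast_sub h, ← sin_pi_sub]
    congr 1
    field_simp

lemma cscSum_eq_sum_min (m : ℕ) :
    cscSum m = ∑ j ∈ Icc 1 (m - 1), (sin (π * (min j (m - j) : ℕ) / m))⁻¹ :=
  sum_congr rfl fun j hj => by rw [sin_pi_mul_div_eq_min (by grind)]

lemma inv_sin_le_inv_sub_cube_div_six {a x : ℝ} (ha : 0 < a) (hax : a ≤ x) (hx : x ≤ 1) :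
    (sin x)⁻¹ ≤ (a - a ^ 3 / 6)⁻¹ := by
  have hxa : 0 ≤ (x - a) * (1 - (x ^ 2 + x * a + a ^ 2) / 6) :=
    mul_nonneg (by linarith) (by nlinarith)
  refine inv_anti₀ (by nlinarith) ?_
  nlinarith [sin_ge_sub_cube (x := x) (by linarith)]

lemma inv_sin_le_inv_one_sub_sq_div_two {b x : ℝ} (hx : x ≤ π / 2) (hb : π / 2 - x ≤ b)
    (hb1 : b ≤ 1) : (sin x)⁻¹ ≤ (1 - b ^ 2 / 2)⁻¹ := by
  rw [← cos_pi_div_two_sub]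
  exact inv_anti₀ (by nlinarith) (by nlinarith [one_sub_sq_div_two_le_cos (x := π / 2 - x)])

lemma inv_le_inv_sin_of_le {b x : ℝ} (hx0 : 0 < x) (hx : x < π) (hxb : x ≤ b) :
    b⁻¹ ≤ (sin x)⁻¹ :=
  inv_anti₀ (sin_pos_of_pos_of_lt_pi hx0 hx) ((sin_le hx0.le).trans hxb)

lemma inv_le_inv_sin_of_le_pi_div_two_sub {a x : ℝ} (ha : 0 ≤ a) (hax : a ≤ π / 2 - x)
    (hx : π / 2 - x ≤ 1) : (1 - a ^ 2 / 2 + 5 / 96 * a ^ 4)⁻¹ ≤ (sin x)⁻¹ := by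
  rw [← cos_pi_div_two_sub]
  set y := π / 2 - x
  have hy : 0 ≤ y := ha.trans hax
  have hcos := (abs_le.1 (cos_bound (x := y) (abs_le.2 ⟨by linarith, hx⟩))).2
  rw [abs_of_nonneg hy] at hcos
  have hpos : 0 < cos y := cos_pos_of_mem_Ioo ⟨by linarith [pi_pos], by linarith [pi_gt_three]⟩
  have hya : 0 ≤ (y ^ 2 - a ^ 2) * (1 / 2 - 5 / 96 * (y ^ 2 + a ^ 2)) :=
    mul_nonneg (by nlinarith) (by nlinarith)
  exact inv_anti₀ hpos (by nlinarith)

lemma cscSum_five_lt : cscSum 5 < 5 * √2 := by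
  have hπ := pi_gt_d6
  have hπ' := pi_lt_d6
  have h1 := inv_sin_le_inv_sub_cube_div_six (x := π * 1 / 5) (a := 3.141592 / 5)
    (by norm_num) (by linarith) (by linarith)
  have h2 := inv_sin_le_inv_one_sub_sq_div_two (x := π * 2 / 5) (b := 3.141593 / 10)
    (by linarith) (by linarith) (by norm_num)
  norm_num only [cscSum_eq_sum_min, sum_Icc_succ_top, min_def, Icc_self, sum_singleton,
    if_true, if_false]
  linarith [lt_sqrt_two]

lemma cscSum_six_lt : cscSum 6 < 6 * √2 := by
  have hπ := pi_gt_d6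
  have hπ' := pi_lt_d6
  have h1 := inv_sin_le_inv_sub_cube_div_six (x := π * 1 / 6) (a := 3.141592 / 6)
    (by norm_num) (by linarith) (by linarith)
  have h2 := inv_sin_le_inv_one_sub_sq_div_two (x := π * 2 / 6) (b := 3.141593 / 6)
    (by linarith) (by linarith) (by norm_num)
  have h3 := inv_sin_le_inv_one_sub_sq_div_two (x := π * 3 / 6) (b := 0)
    (by linarith) (by linarith) (by norm_num)
  norm_num only [cscSum_eq_sum_min, sum_Icc_succ_top, min_def, Icc_self, sum_singleton,
    if_true, if_false]
  linarith [lt_sqrt_two]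

lemma cscSum_seven_lt : cscSum 7 < 7 * √2 := by
  have hπ := pi_gt_d6
  have hπ' := pi_lt_d6
  have h1 := inv_sin_le_inv_sub_cube_div_six (x := π * 1 / 7) (a := 3.141592 / 7)
    (by norm_num) (by linarith) (by linarith)
  have h2 := inv_sin_le_inv_sub_cube_div_six (x := π * 2 / 7) (a := 3.141592 * 2 / 7)
    (by norm_num) (by linarith) (by linarith)
  have h3 := inv_sin_le_inv_one_sub_sq_div_two (x := π * 3 / 7) (b := 3.141593 / 14)
    (by linarith) (by linarith) (by norm_num)
  norm_num only [cscSum_eq_sum_min, sum_Icc_succ_top, min_def, Icc_self, sum_singleton,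
    if_true, if_false]
  linarith [lt_sqrt_two]

lemma cscSum_eight_lt : cscSum 8 < 8 * √2 := by
  have hπ := pi_gt_d6
  have hπ' := pi_lt_d6
  have h1 := inv_sin_le_inv_sub_cube_div_six (x := π * 1 / 8) (a := 3.141592 / 8)
    (by norm_num) (by linarith) (by linarith)
  have h2 := inv_sin_le_inv_sub_cube_div_six (x := π * 2 / 8) (a := 3.141592 * 2 / 8)
    (by norm_num) (by linarith) (by linarith)
  have h3 := inv_sin_le_inv_one_sub_sq_div_two (x := π * 3 / 8) (b := 3.141593 / 8)
    (by linarith) (by linarith) (by norm_num)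
  have h4 := inv_sin_le_inv_one_sub_sq_div_two (x := π * 4 / 8) (b := 0)
    (by linarith) (by linarith) (by norm_num)
  norm_num only [cscSum_eq_sum_min, sum_Icc_succ_top, min_def, Icc_self, sum_singleton,
    if_true, if_false]
  linarith [lt_sqrt_two]

lemma nine_mul_sqrt_two_lt_cscSum : 9 * √2 < cscSum 9 := by
  have hπ := pi_gt_d6
  have hπ' := pi_lt_d6
  have h1 := inv_le_inv_sin_of_le (x := π * 1 / 9) (b := 3.141593 / 9)
    (by positivity) (by linarith) (by linarith)
  have h2 := inv_le_inv_sin_of_le (x := π * 2 / 9) (b := 3.141593 * 2 / 9)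
    (by positivity) (by linarith) (by linarith)
  have h3 := inv_le_inv_sin_of_le_pi_div_two_sub (x := π * 3 / 9) (a := 3.141592 / 6)
    (by norm_num) (by linarith) (by linarith)
  have h4 := inv_le_inv_sin_of_le_pi_div_two_sub (x := π * 4 / 9) (a := 3.141592 / 18)
    (by norm_num) (by linarith) (by linarith)
  norm_num only [cscSum_eq_sum_min, sum_Icc_succ_top, min_def, Icc_self, sum_singleton,
    if_true, if_false]
  linarith [sqrt_two_lt]

theorem stmt_11 :
    (∀ m : ℕ, m = 5 ∨ m = 6 ∨ m = 7 ∨ m = 8 →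
      (∑ j ∈ Finset.Icc 1 (m - 1), (Real.sqrt 2 * Real.sin (π * j / m))⁻¹) - (m : ℝ) < 0) ∧
    (∀ m : ℕ, 9 ≤ m →
      0 < (∑ j ∈ Finset.Icc 1 (m - 1), (Real.sqrt 2 * Real.sin (π * j / m))⁻¹) - (m : ℝ)) := by
  have hsqrt : (0 : ℝ) < √2 := by positivity
  simp only [sum_inv_sqrt_two_mul_sin_eq, sub_neg, sub_pos, div_lt_iff₀ hsqrt, lt_div_iff₀ hsqrt]
  refine ⟨?_, fun m hm => ?_⟩
  · rintro m (rfl | rfl | rfl | rfl)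
    · exact_mod_cast cscSum_five_lt
    · exact_mod_cast cscSum_six_lt
    · exact_mod_cast cscSum_seven_lt
    · exact_mod_cast cscSum_eight_lt
  · rcases hm.eq_or_lt with rfl | hm
    · exact_mod_cast nine_mul_sqrt_two_lt_cscSum
    · exact mul_sqrt_two_lt_cscSum hm
end

section
/- Let m_n = 9 if n = 3, m_n = 7 if n = 4, m_n = 6 if n ∈ {5,6}, and m_n = 5 if n ≥ 7. Then for all integers n ≥ 3 and m ≥ 2, the quantity a_{n,m} := (∑_{j=1}^{m-1} (√2 · sin(πj/m))^{-(n-2)}) − m is positive if and only if m ≥ m_n. -/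
open Real Finset

/-- The threshold `m_n` from the paper. -/
def mThreshold (n : ℕ) : ℕ :=
  if n = 3 then 9 else if n = 4 then 7 else if n ≤ 6 then 6 else 5

/-!
For `m ≤ 4` every angle `πj/m` lies in `[π/4, 3π/4]`, so every term of the sum is at most `1`
and the sum is below `m`. For large `m` the terms with `j` or `m - j` small dominate:
`sin x ≤ x` makes them at least `(m / (√2 π j)) ^ (n - 2)`, and a few of them already exceed `m`.
The finitely many pairs `(n, m)` left in between are decided numerically, enclosing `sin (π s)`,
`0 < s ≤ 1/2`, between rational bounds obtained from `x - x³/6 ≤ sin x ≤ x` and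
`π ∈ (3.141592, 3.141593)`.
-/

/-- `cscPowSum (n - 2) m - m` is the paper's `a_{n,m}`. -/
noncomputable def cscPowSum (k m : ℕ) : ℝ :=
  ∑ j ∈ Icc 1 (m - 1), (√2 * sin (π * j / m))⁻¹ ^ k

lemma sqrt_two_ge_d7 : (1.4142135 : ℝ) ≤ √2 := by
  rw [le_sqrt] <;> norm_num

lemma sqrt_two_le_d7 : √2 ≤ (1.4142136 : ℝ) := by
  rw [sqrt_le_iff]; norm_num

noncomputable def sinPiCubicLower (u : ℝ) : ℝ := 3.141592 * u * (1 - (3.141593 * u) ^ 2 / 6)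

/- Both bounds use `sin (π s) = 1 - 2 sin (π u) ^ 2` with `u = (1/2 - s)/2`, together with
`sinPiCubicLower u ≤ sin (π u) ≤ 3.141593 u`. -/
noncomputable def sinPiLower (s : ℝ) : ℝ :=
  max (sinPiCubicLower s) (1 - 2 * (3.141593 * ((1 / 2 - s) / 2)) ^ 2)

noncomputable def sinPiUpper (s : ℝ) : ℝ := 1 - 2 * sinPiCubicLower ((1 / 2 - s) / 2) ^ 2

lemma sinPiCubicLower_pos {u : ℝ} (h0 : 0 < u) (h1 : u ≤ 1 / 2) : 0 < sinPiCubicLower u := by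
  have : (3.141593 * u) ^ 2 ≤ 3.141593 ^ 2 / 4 := by nlinarith
  exact mul_pos (by positivity) (by linarith)

lemma sinPiCubicLower_nonneg {u : ℝ} (h0 : 0 ≤ u) (h1 : u ≤ 1 / 2) : 0 ≤ sinPiCubicLower u := by
  rcases h0.eq_or_lt with rfl | h0
  · simp [sinPiCubicLower]
  · exact (sinPiCubicLower_pos h0 h1).le

lemma sinPiCubicLower_le_sin {u : ℝ} (h0 : 0 ≤ u) (h1 : u ≤ 1 / 2) :
    sinPiCubicLower u ≤ sin (π * u) := by
  have hπ : π * u ≤ 3.141593 * u := mul_le_mul_of_nonneg_right pi_lt_d6.le h0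
  have hsq : (π * u) ^ 2 ≤ (3.141593 * u) ^ 2 := pow_le_pow_left₀ (by positivity) hπ 2
  calc sinPiCubicLower u ≤ π * u * (1 - (π * u) ^ 2 / 6) := by
        unfold sinPiCubicLower
        gcongr
        · nlinarith
        · exact pi_gt_d6.le
    _ = π * u - (π * u) ^ 3 / 6 := by ring
    _ ≤ sin (π * u) := sin_ge_sub_cube (by positivity)

lemma sin_pi_mul_eq_one_sub_two_mul_sin_sq (s : ℝ) :
    sin (π * s) = 1 - 2 * sin (π * ((1 / 2 - s) / 2)) ^ 2 := by
  rw [← cos_two_mul_eq_one_sub, ← cos_pi_div_two_sub]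
  ring_nf

lemma sinPiLower_le_sin {s : ℝ} (h0 : 0 ≤ s) (h1 : s ≤ 1 / 2) : sinPiLower s ≤ sin (π * s) := by
  refine max_le (sinPiCubicLower_le_sin h0 h1) ?_
  rw [sin_pi_mul_eq_one_sub_two_mul_sin_sq]
  have hu : 0 ≤ (1 / 2 - s) / 2 := by linarith
  have hπ : π * ((1 / 2 - s) / 2) ≤ 3.141593 * ((1 / 2 - s) / 2) :=
    mul_le_mul_of_nonneg_right pi_lt_d6.le hu
  have := sin_sq_le_sq (x := π * ((1 / 2 - s) / 2))
  have := pow_le_pow_left₀ (by positivity) hπ 2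
  linarith

lemma sin_le_sinPiUpper {s : ℝ} (h0 : 0 ≤ s) (h1 : s ≤ 1 / 2) : sin (π * s) ≤ sinPiUpper s := by
  rw [sin_pi_mul_eq_one_sub_two_mul_sin_sq, sinPiUpper]
  have h := sinPiCubicLower_le_sin (u := (1 / 2 - s) / 2) (by linarith) (by linarith)
  have := sinPiCubicLower_nonneg (u := (1 / 2 - s) / 2) (by linarith) (by linarith)
  gcongr

lemma sinPiLower_pos {s : ℝ} (h0 : 0 < s) (h1 : s ≤ 1 / 2) : 0 < sinPiLower s :=
  lt_max_of_lt_left (sinPiCubicLower_pos h0 h1)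

lemma sinPiUpper_pos {s : ℝ} (h0 : 0 < s) (h1 : s ≤ 1 / 2) : 0 < sinPiUpper s :=
  (sinPiLower_pos h0 h1).trans_le ((sinPiLower_le_sin h0.le h1).trans (sin_le_sinPiUpper h0.le h1))

lemma min_one_sub_mem_Ioc {r : ℝ} (h0 : 0 < r) (h1 : r < 1) :
    min r (1 - r) ∈ Set.Ioc 0 (1 / 2) := by
  refine ⟨lt_min h0 (by linarith), ?_⟩
  rcases le_total r (1 / 2) with h | h
  · exact min_le_of_left_le h
  · exact min_le_of_right_le (by linarith)

lemma div_mem_Ioo_of_mem_Icc {j m : ℕ} (hj : j ∈ Icc 1 (m - 1)) :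
    (j : ℝ) / m ∈ Set.Ioo 0 1 := by
  rw [mem_Icc] at hj
  have hm : (0 : ℝ) < m := by exact_mod_cast (show 0 < m by omega)
  refine ⟨div_pos (by exact_mod_cast hj.1) hm, (div_lt_one hm).2 ?_⟩
  exact_mod_cast (show j < m by omega)

lemma min_div_one_sub_div_mem_Ioc {j m : ℕ} (hj : j ∈ Icc 1 (m - 1)) :
    min ((j : ℝ) / m) (1 - j / m) ∈ Set.Ioc 0 (1 / 2) :=
  min_one_sub_mem_Ioc (div_mem_Ioo_of_mem_Icc hj).1 (div_mem_Ioo_of_mem_Icc hj).2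

lemma sin_pi_mul_div_pos {j m : ℕ} (hj : j ∈ Icc 1 (m - 1)) : 0 < sin (π * j / m) := by
  obtain ⟨h0, h1⟩ := div_mem_Ioo_of_mem_Icc hj
  rw [mul_div_assoc]
  exact sin_pos_of_pos_of_lt_pi (by positivity) (by nlinarith [pi_pos])

lemma sin_pi_mul_div_eq_sin_min (j m : ℕ) :
    sin (π * j / m) = sin (π * min ((j : ℝ) / m) (1 - j / m)) := by
  rcases min_choice ((j : ℝ) / m) (1 - j / m) with h | h <;> rw [h, mul_div_assoc]
  rw [mul_one_sub, sin_pi_sub]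

lemma inv_sqrt_two_mul_sin_le {j m : ℕ} (hj : j ∈ Icc 1 (m - 1)) :
    (√2 * sin (π * j / m))⁻¹ ≤ (1.4142135 * sinPiLower (min ((j : ℝ) / m) (1 - j / m)))⁻¹ := by
  obtain ⟨hs0, hs1⟩ := min_div_one_sub_div_mem_Ioc hj
  have hL := sinPiLower_pos hs0 hs1
  rw [sin_pi_mul_div_eq_sin_min]
  exact inv_anti₀ (mul_pos (by norm_num) hL)
    (mul_le_mul sqrt_two_ge_d7 (sinPiLower_le_sin hs0.le hs1) hL.le (sqrt_nonneg 2))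

lemma le_inv_sqrt_two_mul_sin {j m : ℕ} (hj : j ∈ Icc 1 (m - 1)) :
    (1.4142136 * sinPiUpper (min ((j : ℝ) / m) (1 - j / m)))⁻¹ ≤ (√2 * sin (π * j / m))⁻¹ := by
  obtain ⟨hs0, hs1⟩ := min_div_one_sub_div_mem_Ioc hj
  have hsin := sin_pi_mul_div_pos hj
  rw [sin_pi_mul_div_eq_sin_min] at hsin ⊢
  exact inv_anti₀ (mul_pos (sqrt_pos.2 two_pos) hsin)
    (mul_le_mul sqrt_two_le_d7 (sin_le_sinPiUpper hs0.le hs1) hsin.le (by norm_num))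

lemma div_sqrt_two_mul_pi_div_le {j m : ℕ} (hj : j ∈ Icc 1 (m - 1)) :
    (m / (√2 * π)) / j ≤ (√2 * sin (π * j / m))⁻¹ := by
  have hsin := sin_pi_mul_div_pos hj
  calc (m / (√2 * π)) / j = (√2 * (π * j / m))⁻¹ := by field_simp
    _ ≤ (√2 * sin (π * j / m))⁻¹ := by
      gcongr
      exact sin_le (by positivity)

lemma cscPowSum_le_sum_sinPiLower (k m : ℕ) :
    cscPowSum k m ≤
      ∑ j ∈ Icc 1 (m - 1), (1.4142135 * sinPiLower (min ((j : ℝ) / m) (1 - j / m)))⁻¹ ^ k :=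
  sum_le_sum fun _ hj => pow_le_pow_left₀
    (inv_nonneg.2 (mul_nonneg (sqrt_nonneg 2) (sin_pi_mul_div_pos hj).le))
    (inv_sqrt_two_mul_sin_le hj) k

lemma sum_sinPiUpper_le_cscPowSum (k m : ℕ) :
    ∑ j ∈ Icc 1 (m - 1), (1.4142136 * sinPiUpper (min ((j : ℝ) / m) (1 - j / m)))⁻¹ ^ k
      ≤ cscPowSum k m :=
  sum_le_sum fun _ hj => pow_le_pow_left₀
    (inv_nonneg.2 (mul_nonneg (by norm_num) (sinPiUpper_pos
      (min_div_one_sub_div_mem_Ioc hj).1 (min_div_one_sub_div_mem_Ioc hj).2).le))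
    (le_inv_sqrt_two_mul_sin hj) k

lemma sum_Icc_add_reflect_le_sum_Icc {m J : ℕ} {f : ℕ → ℝ} (hJ : 2 * J < m)
    (hf : ∀ j ∈ Icc 1 (m - 1), 0 ≤ f j) :
    ∑ j ∈ Icc 1 J, (f j + f (m - j)) ≤ ∑ j ∈ Icc 1 (m - 1), f j := by
  have hinj : Set.InjOn (m - ·) (Icc 1 J) := by
    intro a ha b hb hab
    simp only [coe_Icc, Set.mem_Icc] at ha hb
    simp only at hab
    omega
  have hdisj : Disjoint (Icc 1 J) ((Icc 1 J).image (m - ·)) := by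
    rw [disjoint_left]
    intro a ha hb
    obtain ⟨b, hb', rfl⟩ := mem_image.1 hb
    rw [mem_Icc] at ha hb'
    omega
  have hsub : Icc 1 J ∪ (Icc 1 J).image (m - ·) ⊆ Icc 1 (m - 1) := by
    intro a ha
    rcases mem_union.1 ha with ha | ha
    · rw [mem_Icc] at ha ⊢; omega
    · obtain ⟨b, hb, rfl⟩ := mem_image.1 ha
      rw [mem_Icc] at hb ⊢; omega
  rw [sum_add_distrib, ← sum_image hinj, ← sum_union hdisj]
  exact sum_le_sum_of_subset_of_nonneg hsub fun j hj _ => hf j hj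

lemma sin_pi_mul_sub_div {j m : ℕ} (hj : j ≤ m) : sin (π * ↑(m - j) / m) = sin (π * j / m) := by
  rcases Nat.eq_zero_or_pos m with rfl | hm
  · simp
  rw [Nat.cast_sub hj, mul_sub, sub_div, mul_div_cancel_right₀ _ (by positivity), sin_pi_sub]

lemma two_mul_sum_le_cscPowSum {k m J : ℕ} (hJ : 2 * J < m) :
    2 * ∑ j ∈ Icc 1 J, (√2 * sin (π * j / m))⁻¹ ^ k ≤ cscPowSum k m := by
  calc 2 * ∑ j ∈ Icc 1 J, (√2 * sin (π * j / m))⁻¹ ^ k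
      = ∑ j ∈ Icc 1 J,
          ((√2 * sin (π * j / m))⁻¹ ^ k + (√2 * sin (π * ↑(m - j) / m))⁻¹ ^ k) := by
        rw [mul_sum]
        refine sum_congr rfl fun j hj => ?_
        rw [sin_pi_mul_sub_div (by rw [mem_Icc] at hj; omega), two_mul]
    _ ≤ cscPowSum k m := sum_Icc_add_reflect_le_sum_Icc hJ fun j hj =>
        pow_nonneg (inv_nonneg.2 (mul_nonneg (sqrt_nonneg 2) (sin_pi_mul_div_pos hj).le)) k

lemma two_mul_sum_harmonic_le_cscPowSum {k m J : ℕ} (hJ : 2 * J < m) :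
    2 * ∑ j ∈ Icc 1 J, (m / (√2 * π) / j) ^ k ≤ cscPowSum k m := by
  refine le_trans ?_ (two_mul_sum_le_cscPowSum hJ)
  gcongr with j hj
  exact div_sqrt_two_mul_pi_div_le (by rw [mem_Icc] at hj ⊢; omega)

lemma le_mul_div_sqrt_two_mul_pi (m : ℕ) : (m : ℝ) ≤ 4.4429 * (m / (√2 * π)) := by
  have hc : √2 * π ≤ 4.4429 := by nlinarith [sqrt_two_le_d7, pi_lt_d6, pi_pos, sqrt_nonneg 2]
  rw [mul_div_assoc', le_div_iff₀ (by positivity)]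
  exact (mul_le_mul_of_nonneg_left hc (Nat.cast_nonneg m)).trans_eq (mul_comm _ _)

lemma one_le_sqrt_two_mul_sin {x : ℝ} (h1 : π / 4 ≤ x) (h2 : x ≤ 3 * π / 4) :
    1 ≤ √2 * sin x := by
  have key : ∀ y, π / 4 ≤ y → y ≤ π / 2 → 1 ≤ √2 * sin y := fun y hy1 hy2 => by
    have := sin_le_sin_of_le_of_le_pi_div_two (by linarith [pi_pos]) hy2 hy1
    rw [sin_pi_div_four] at this
    nlinarith [mul_self_sqrt (zero_le_two : (0 : ℝ) ≤ 2), sqrt_nonneg 2]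
  rcases le_total x (π / 2) with h | h
  · exact key x h1 h
  · rw [← sin_pi_sub]; exact key _ (by linarith) (by linarith)

lemma cscPowSum_le_of_le_four (k : ℕ) {m : ℕ} (hm : m ≤ 4) : cscPowSum k m ≤ m := by
  have hterm : ∀ j ∈ Icc 1 (m - 1), (√2 * sin (π * j / m))⁻¹ ^ k ≤ 1 := fun j hj => by
    rw [mem_Icc] at hj
    have hm0 : (0 : ℝ) < m := by exact_mod_cast (show 0 < m by omega)
    have h4j : (m : ℝ) ≤ 4 * j := by exact_mod_cast (show m ≤ 4 * j by omega)
    have h3m : 4 * (j : ℝ) ≤ 3 * m := by exact_mod_cast (show 4 * j ≤ 3 * m by omega)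
    have h1 := one_le_sqrt_two_mul_sin (x := π * j / m)
      (by rw [le_div_iff₀ hm0]; nlinarith [pi_pos]) (by rw [div_le_iff₀ hm0]; nlinarith [pi_pos])
    exact pow_le_one₀ (inv_nonneg.2 (by linarith)) (inv_le_one_of_one_le₀ h1)
  calc cscPowSum k m ≤ ∑ _j ∈ Icc 1 (m - 1), (1 : ℝ) := sum_le_sum hterm
    _ ≤ m := by simp

lemma lt_cscPowSum_one {m : ℕ} (hm : 9 ≤ m) : (m : ℝ) < cscPowSum 1 m := by
  rcases lt_or_ge m 11 with hm' | hm'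
  · refine lt_of_lt_of_le ?_ (sum_sinPiUpper_le_cscPowSum 1 m)
    interval_cases m <;> norm_num [sum_Icc_succ_top, sinPiUpper, sinPiCubicLower, min_def]
  · refine lt_of_lt_of_le ?_ (two_mul_sum_harmonic_le_cscPowSum (J := 5) (by omega))
    have := le_mul_div_sqrt_two_mul_pi m
    have : (0 : ℝ) < m := by positivity
    norm_num [sum_Icc_succ_top]
    linarith

lemma lt_cscPowSum_two {m : ℕ} (hm : 7 ≤ m) : (m : ℝ) < cscPowSum 2 m := by
  rcases lt_or_ge m 8 with hm' | hm'
  · refine lt_of_lt_of_le ?_ (sum_sinPiUpper_le_cscPowSum 2 m)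
    interval_cases m; norm_num [sum_Icc_succ_top, sinPiUpper, sinPiCubicLower, min_def]
  · refine lt_of_lt_of_le ?_ (two_mul_sum_harmonic_le_cscPowSum (J := 3) (by omega))
    have := le_mul_div_sqrt_two_mul_pi m
    have : (8 : ℝ) ≤ m := by exact_mod_cast hm'
    norm_num [sum_Icc_succ_top]
    nlinarith

lemma lt_cscPowSum_three {m : ℕ} (hm : 6 ≤ m) : (m : ℝ) < cscPowSum 3 m := by
  rcases lt_or_ge m 7 with hm' | hm'
  · refine lt_of_lt_of_le ?_ (sum_sinPiUpper_le_cscPowSum 3 m)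
    interval_cases m; norm_num [sum_Icc_succ_top, sinPiUpper, sinPiCubicLower, min_def]
  · refine lt_of_lt_of_le ?_ (two_mul_sum_harmonic_le_cscPowSum (J := 1) (by omega))
    have hmx := le_mul_div_sqrt_two_mul_pi m
    set x := (m : ℝ) / (√2 * π)
    have hx : 1.5 ≤ x := by linarith [(show (7 : ℝ) ≤ m by exact_mod_cast hm')]
    have hx2 : 2.25 ≤ x ^ 2 := by nlinarith
    calc (m : ℝ) < 2 * x ^ 3 := by nlinarith
      _ = 2 * ∑ j ∈ Icc (1 : ℕ) 1, (x / j) ^ 3 := by simp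

lemma lt_cscPowSum_of_four_le {k m : ℕ} (hk : 4 ≤ k) (hm : 6 ≤ m) :
    (m : ℝ) < cscPowSum k m := by
  refine lt_of_lt_of_le ?_ (two_mul_sum_harmonic_le_cscPowSum (J := 1) (by omega))
  have hmx := le_mul_div_sqrt_two_mul_pi m
  set x := (m : ℝ) / (√2 * π)
  have hx : 1.35 ≤ x := by linarith [(show (6 : ℝ) ≤ m by exact_mod_cast hm)]
  have hx3 : 1.35 ^ 3 ≤ x ^ 3 := pow_le_pow_left₀ (by norm_num) hx 3
  calc (m : ℝ) < 2 * x ^ 4 := by nlinarith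
    _ ≤ 2 * x ^ k := by gcongr 2 * ?_; exact pow_le_pow_right₀ (by linarith) hk
    _ = 2 * ∑ j ∈ Icc (1 : ℕ) 1, (x / j) ^ k := by simp

lemma lt_cscPowSum_of_five_le {k m : ℕ} (hk : 5 ≤ k) (hm : 5 ≤ m) :
    (m : ℝ) < cscPowSum k m := by
  rcases hm.eq_or_lt with rfl | hm
  · have ht := le_inv_sqrt_two_mul_sin (j := 1) (m := 5) (by decide)
    set y := (1.4142136 * sinPiUpper (min (((1 : ℕ) : ℝ) / ((5 : ℕ) : ℝ)) (1 - (1 : ℕ) / (5 : ℕ))))⁻¹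
    have hy : 1.202 ≤ y := by norm_num [y, sinPiUpper, sinPiCubicLower, min_def]
    calc ((5 : ℕ) : ℝ) < 2 * 1.202 ^ 5 := by norm_num
      _ ≤ 2 * y ^ k := by
        gcongr 2 * ?_
        exact (pow_le_pow_left₀ (by norm_num) hy 5).trans (pow_le_pow_right₀ (by linarith) hk)
      _ ≤ 2 * ∑ j ∈ Icc (1 : ℕ) 1, (√2 * sin (π * j / (5 : ℕ)))⁻¹ ^ k := by
        gcongr 2 * ?_
        simpa using pow_le_pow_left₀ (by linarith) ht k
      _ ≤ cscPowSum k 5 := two_mul_sum_le_cscPowSum (by norm_num)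
  · exact lt_cscPowSum_of_four_le (by omega) hm

lemma cscPowSum_one_le {m : ℕ} (hm : m < 9) : cscPowSum 1 m ≤ m := by
  rcases le_or_gt m 4 with hm' | hm'
  · exact cscPowSum_le_of_le_four 1 hm'
  refine (cscPowSum_le_sum_sinPiLower 1 m).trans ?_
  interval_cases m <;> norm_num [sum_Icc_succ_top, sinPiLower, sinPiCubicLower, min_def, max_def]

lemma cscPowSum_two_le {m : ℕ} (hm : m < 7) : cscPowSum 2 m ≤ m := by
  rcases le_or_gt m 4 with hm' | hm'
  · exact cscPowSum_le_of_le_four 2 hm'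
  refine (cscPowSum_le_sum_sinPiLower 2 m).trans ?_
  interval_cases m <;> norm_num [sum_Icc_succ_top, sinPiLower, sinPiCubicLower, min_def, max_def]

lemma cscPowSum_le_of_lt_six {k m : ℕ} (hk : k ≤ 4) (hm : m < 6) : cscPowSum k m ≤ m := by
  rcases le_or_gt m 4 with hm' | hm'
  · exact cscPowSum_le_of_le_four k hm'
  refine (cscPowSum_le_sum_sinPiLower k m).trans ?_
  obtain rfl : m = 5 := by omega
  interval_cases k <;> norm_num [sum_Icc_succ_top, sinPiLower, sinPiCubicLower, min_def, max_def]

lemma lt_cscPowSum_iff {k T : ℕ} (hle : ∀ m, m < T → cscPowSum k m ≤ m)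
    (hlt : ∀ m, T ≤ m → (m : ℝ) < cscPowSum k m) (m : ℕ) :
    (m : ℝ) < cscPowSum k m ↔ T ≤ m :=
  ⟨fun h => not_lt.1 fun hm => not_lt.2 (hle m hm) h, hlt m⟩

theorem stmt_12_general (n m : ℕ) (hn : 3 ≤ n) :
    0 < (∑ j ∈ Finset.Icc 1 (m - 1), (Real.sqrt 2 * Real.sin (π * j / m))⁻¹ ^ (n - 2))
        - (m : ℝ) ↔ mThreshold n ≤ m := by
  rw [sub_pos]
  change (m : ℝ) < cscPowSum (n - 2) m ↔ _
  obtain ⟨k, rfl⟩ : ∃ k, n = k + 3 := ⟨n - 3, by omega⟩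
  rw [show k + 3 - 2 = k + 1 by omega]
  rcases k with _ | _ | _ | _ | k
  · exact lt_cscPowSum_iff (fun _ => cscPowSum_one_le) (fun _ => lt_cscPowSum_one) m
  · exact lt_cscPowSum_iff (fun _ => cscPowSum_two_le) (fun _ => lt_cscPowSum_two) m
  · exact lt_cscPowSum_iff (fun _ => cscPowSum_le_of_lt_six (by norm_num))
      (fun _ => lt_cscPowSum_three) m
  · exact lt_cscPowSum_iff (fun _ => cscPowSum_le_of_lt_six (by norm_num))
      (fun _ => lt_cscPowSum_of_four_le le_rfl) m
  · rw [show mThreshold (k + 4 + 3) = 5 by unfold mThreshold; split_ifs <;> omega]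
    exact lt_cscPowSum_iff (fun _ hm => cscPowSum_le_of_le_four _ (by omega))
      (fun _ => lt_cscPowSum_of_five_le (by omega)) m

theorem stmt_12 (n m : ℕ) (hn : 3 ≤ n) (hm : 2 ≤ m) :
    0 < (∑ j ∈ Finset.Icc 1 (m - 1), (Real.sqrt 2 * Real.sin (π * j / m))⁻¹ ^ (n - 2))
        - (m : ℝ) ↔ mThreshold n ≤ m :=
  stmt_12_general n m hn
end
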